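/- Let d_x, d_y ≥ 1, set Z = ℝ^{d_x} × ℝ^{d_y}, let T > 0, and let l : Z → ℝ be continuous with |l(x,y)| ≤ M for all (x,y), Lipschitz in x with constant C uniformly in y, and Lipschitz in y with constant C uniformly in x. Let γⁿ : [0,T] → P(Z) (n ∈ ℕ) and γ : [0,T] → P(Z) be such that sup_{t ∈ [0,T]} d_BL(γⁿ_t, γ_t) → 0 as n → ∞. Then the Nikaidô–Isoda errors of the marginals converge uniformly in time: sup_{t ∈ [0,T]} | NI((γⁿ_t)_X, (γⁿ_t)_Y) − NI((γ_t)_X, (γ_t)_Y) | → 0 as n → ∞. -/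

import Mathlib

open MeasureTheory NNReal
set_option linter.unusedSectionVars false
set_option linter.unusedVariables false

/-- The dual bounded-Lipschitz distance between two (probability) measures:
the supremum of `∫ f dμ - ∫ f dν` over bounded Lipschitz `f` with
`‖f‖_∞ + Lip f ≤ 1`. -/
noncomputable def dBL {S : Type*} [MetricSpace S] [MeasurableSpace S]
    (μ ν : Measure S) : ℝ :=
  sSup {r : ℝ | ∃ f : S → ℝ, (∃ a b : ℝ, 0 ≤ a ∧ 0 ≤ b ∧ a + b ≤ 1 ∧
      (∀ x, |f x| ≤ a) ∧ LipschitzWith b.toNNReal f) ∧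
    r = (∫ x, f x ∂μ) - ∫ x, f x ∂ν}

/-- The expected loss `L(μ, ν) = ∫∫ l(x,y) dμ(x) dν(y)`. -/
noncomputable def Lexp {dx dy : ℕ}
    (l : EuclideanSpace ℝ (Fin dx) × EuclideanSpace ℝ (Fin dy) → ℝ)
    (μ : Measure (EuclideanSpace ℝ (Fin dx)))
    (ν : Measure (EuclideanSpace ℝ (Fin dy))) : ℝ :=
  ∫ y, (∫ x, l (x, y) ∂μ) ∂ν

/-- The Nikaidô–Isoda error
`NI(μ, ν) = sup_{ν'} L(μ, ν') - inf_{μ'} L(μ', ν)`, with the supremum and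
infimum over Borel probability measures. -/
noncomputable def NIerr {dx dy : ℕ}
    (l : EuclideanSpace ℝ (Fin dx) × EuclideanSpace ℝ (Fin dy) → ℝ)
    (μ : Measure (EuclideanSpace ℝ (Fin dx)))
    (ν : Measure (EuclideanSpace ℝ (Fin dy))) : ℝ :=
  (⨆ ν' : ProbabilityMeasure (EuclideanSpace ℝ (Fin dy)),
      Lexp l μ (ν' : Measure (EuclideanSpace ℝ (Fin dy)))) -
    ⨅ μ' : ProbabilityMeasure (EuclideanSpace ℝ (Fin dx)),
      Lexp l (μ' : Measure (EuclideanSpace ℝ (Fin dx))) ν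

/-- The Nikaidô–Isoda error of the two marginals of a measure on the product
space `Z = ℝ^{dx} × ℝ^{dy}`. -/
noncomputable def NImarg {dx dy : ℕ}
    (l : EuclideanSpace ℝ (Fin dx) × EuclideanSpace ℝ (Fin dy) → ℝ)
    (η : Measure (EuclideanSpace ℝ (Fin dx) × EuclideanSpace ℝ (Fin dy))) : ℝ :=
  NIerr l (η.map Prod.fst) (η.map Prod.snd)

section dBLlemmas
variable {S : Type*} [MetricSpace S] [MeasurableSpace S]
variable (μ ν : Measure S) [IsProbabilityMeasure μ] [IsProbabilityMeasure ν]

lemma dBL_set_le_two {r : ℝ}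
    (hr : r ∈ {r : ℝ | ∃ f : S → ℝ, (∃ a b : ℝ, 0 ≤ a ∧ 0 ≤ b ∧ a + b ≤ 1 ∧
      (∀ x, |f x| ≤ a) ∧ LipschitzWith b.toNNReal f) ∧
    r = (∫ x, f x ∂μ) - ∫ x, f x ∂ν}) : r ≤ 2 := by
  obtain ⟨f, ⟨a, b, ha, hb, hab, hfa, _⟩, rfl⟩ := hr
  have h1 : ‖∫ x, f x ∂μ‖ ≤ a * (μ Set.univ).toReal :=
    norm_integral_le_of_norm_le_const (Filter.Eventually.of_forall fun x => by
      simpa [Real.norm_eq_abs] using hfa x)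
  have h2 : ‖∫ x, f x ∂ν‖ ≤ a * (ν Set.univ).toReal :=
    norm_integral_le_of_norm_le_const (Filter.Eventually.of_forall fun x => by
      simpa [Real.norm_eq_abs] using hfa x)
  simp only [measure_univ, ENNReal.toReal_one, mul_one, Real.norm_eq_abs] at h1 h2
  have := abs_le.1 h1; have := abs_le.1 h2
  have ha1 : a ≤ 1 := by linarith
  linarith

lemma dBL_bddAbove : BddAbove {r : ℝ | ∃ f : S → ℝ, (∃ a b : ℝ, 0 ≤ a ∧ 0 ≤ b ∧ a + b ≤ 1 ∧
      (∀ x, |f x| ≤ a) ∧ LipschitzWith b.toNNReal f) ∧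
    r = (∫ x, f x ∂μ) - ∫ x, f x ∂ν} :=
  ⟨2, fun _ hr => dBL_set_le_two μ ν hr⟩

lemma zero_mem_dBL_set : (0 : ℝ) ∈ {r : ℝ | ∃ f : S → ℝ, (∃ a b : ℝ, 0 ≤ a ∧ 0 ≤ b ∧ a + b ≤ 1 ∧
      (∀ x, |f x| ≤ a) ∧ LipschitzWith b.toNNReal f) ∧
    r = (∫ x, f x ∂μ) - ∫ x, f x ∂ν} := by
  refine ⟨fun _ => 0, ⟨0, 0, le_refl 0, le_refl 0, by norm_num,
    fun x => by simp, by simpa using LipschitzWith.const (0 : ℝ)⟩, by simp⟩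

lemma dBL_nonneg : 0 ≤ dBL μ ν :=
  le_csSup (dBL_bddAbove μ ν) (zero_mem_dBL_set μ ν)

lemma dBL_le_two : dBL μ ν ≤ 2 :=
  csSup_le ⟨0, zero_mem_dBL_set μ ν⟩ fun _ hr => dBL_set_le_two μ ν hr

lemma integral_sub_le_dBL [Nonempty S] {g : S → ℝ} {M : ℝ} {C : ℝ≥0}
    (hM : ∀ x, |g x| ≤ M) (hL : LipschitzWith C g) :
    (∫ x, g x ∂μ) - ∫ x, g x ∂ν ≤ (M + C) * dBL μ ν := by
  have hM0 : 0 ≤ M := le_trans (abs_nonneg _) (hM Classical.ofNonempty)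
  set K : ℝ := M + C with hK
  have hK0 : 0 ≤ K := by positivity
  rcases eq_or_lt_of_le hK0 with h0 | hKpos
  · have hM' : M = 0 := by
      have : (0 : ℝ) ≤ (C : ℝ) := C.coe_nonneg
      linarith
    have hg : ∀ x, g x = 0 := fun x => abs_eq_zero.1 (le_antisymm (hM' ▸ hM x) (abs_nonneg _))
    have : (fun x => g x) = fun _ => (0 : ℝ) := funext hg
    simp [this, ← h0]
  · set f : S → ℝ := fun x => K⁻¹ * g x with hf
    have hmem : ((∫ x, f x ∂μ) - ∫ x, f x ∂ν) ∈
        {r : ℝ | ∃ f : S → ℝ, (∃ a b : ℝ, 0 ≤ a ∧ 0 ≤ b ∧ a + b ≤ 1 ∧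
          (∀ x, |f x| ≤ a) ∧ LipschitzWith b.toNNReal f) ∧
          r = (∫ x, f x ∂μ) - ∫ x, f x ∂ν} := by
      refine ⟨f, ⟨M / K, C / K, by positivity, by positivity, ?_, ?_, ?_⟩, rfl⟩
      · rw [← add_div, hK, div_self (ne_of_gt hKpos)]
      · intro x
        rw [hf, abs_mul, abs_of_nonneg (inv_nonneg.2 hK0), div_eq_inv_mul, mul_comm K⁻¹ _]
        exact mul_le_mul_of_nonneg_right (hM x) (inv_nonneg.2 hK0) |>.trans_eq (mul_comm _ _)
      · apply LipschitzWith.of_dist_le_mul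
        intro x y
        have : ((C / K : ℝ).toNNReal : ℝ) = C / K :=
          Real.coe_toNNReal _ (by positivity)
        rw [this, hf]
        have hd := hL.dist_le_mul x y
        calc dist (K⁻¹ * g x) (K⁻¹ * g y) = K⁻¹ * dist (g x) (g y) := by
              rw [Real.dist_eq, Real.dist_eq, ← mul_sub, abs_mul,
                abs_of_nonneg (inv_nonneg.2 hK0)]
          _ ≤ K⁻¹ * ((C : ℝ) * dist x y) :=
              mul_le_mul_of_nonneg_left hd (inv_nonneg.2 hK0)
          _ = C / K * dist x y := by ring
    have hle : (∫ x, f x ∂μ) - ∫ x, f x ∂ν ≤ dBL μ ν :=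
      le_csSup (dBL_bddAbove μ ν) hmem
    have hint : ∀ (ρ : Measure S), ∫ x, f x ∂ρ = K⁻¹ * ∫ x, g x ∂ρ := fun ρ =>
      integral_const_mul K⁻¹ g
    rw [hint μ, hint ν, ← mul_sub] at hle
    calc (∫ x, g x ∂μ) - ∫ x, g x ∂ν = K * (K⁻¹ * ((∫ x, g x ∂μ) - ∫ x, g x ∂ν)) := by
          field_simp
      _ ≤ K * dBL μ ν := mul_le_mul_of_nonneg_left hle hK0

end dBLlemmas

section dBLlemmas2
variable {S : Type*} [MetricSpace S] [MeasurableSpace S] [Nonempty S]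
variable (μ ν : Measure S) [IsProbabilityMeasure μ] [IsProbabilityMeasure ν]

lemma abs_integral_sub_le_dBL {g : S → ℝ} {M : ℝ} {C : ℝ≥0}
    (hM : ∀ x, |g x| ≤ M) (hL : LipschitzWith C g) :
    |(∫ x, g x ∂μ) - ∫ x, g x ∂ν| ≤ (M + C) * dBL μ ν := by
  rw [abs_le]
  constructor
  · have h := integral_sub_le_dBL μ ν (g := fun x => -g x) (M := M) (C := C)
      (fun x => by simpa using hM x) hL.neg
    simp only [integral_neg] at h
    linarith
  · exact integral_sub_le_dBL μ ν hM hL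

end dBLlemmas2

section supInf

lemma abs_ciSup_sub_ciSup {ι : Sort*} [Nonempty ι] {f g : ι → ℝ} {c : ℝ}
    (hf : BddAbove (Set.range f)) (hg : BddAbove (Set.range g))
    (h : ∀ i, |f i - g i| ≤ c) : |(⨆ i, f i) - ⨆ i, g i| ≤ c := by
  rw [abs_le]
  constructor
  · have : (⨆ i, g i) ≤ (⨆ i, f i) + c := ciSup_le fun i => by
      have := abs_le.1 (h i)
      have := le_ciSup hf i
      linarith
    linarith
  · have : (⨆ i, f i) ≤ (⨆ i, g i) + c := ciSup_le fun i => by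
      have := abs_le.1 (h i)
      have := le_ciSup hg i
      linarith
    linarith

lemma abs_ciInf_sub_ciInf {ι : Sort*} [Nonempty ι] {f g : ι → ℝ} {c : ℝ}
    (hf : BddBelow (Set.range f)) (hg : BddBelow (Set.range g))
    (h : ∀ i, |f i - g i| ≤ c) : |(⨅ i, f i) - ⨅ i, g i| ≤ c := by
  rw [abs_le]
  constructor
  · have : (⨅ i, g i) - c ≤ ⨅ i, f i := le_ciInf fun i => by
      have := abs_le.1 (h i)
      have := ciInf_le hg i
      linarith
    linarith
  · have : (⨅ i, f i) - c ≤ ⨅ i, g i := le_ciInf fun i => by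
      have := abs_le.1 (h i)
      have := ciInf_le hf i
      linarith
    linarith

end supInf

section main
variable {dx dy : ℕ}
  {l : EuclideanSpace ℝ (Fin dx) × EuclideanSpace ℝ (Fin dy) → ℝ} {M : ℝ} {C : ℝ≥0}

lemma integrable_of_bdd {S : Type*} [MetricSpace S] [MeasurableSpace S]
    [OpensMeasurableSpace S] {μ : Measure S} [IsFiniteMeasure μ] {f : S → ℝ}
    {M : ℝ} (hf : Continuous f) (hM : ∀ x, |f x| ≤ M) : Integrable f μ :=
  Integrable.mono' (integrable_const M) hf.aestronglyMeasurable
    (Filter.Eventually.of_forall fun x => by simpa [Real.norm_eq_abs] using hM x)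

lemma hfun_lip (hc : Continuous l) (hb : ∀ x y, |l (x, y)| ≤ M)
    (hly : ∀ x, LipschitzWith C (fun y => l (x, y)))
    (μ : Measure (EuclideanSpace ℝ (Fin dx))) [IsProbabilityMeasure μ] :
    LipschitzWith C (fun y => ∫ x, l (x, y) ∂μ) := by
  apply LipschitzWith.of_dist_le_mul
  intro y y'
  have hint : ∀ y₀, Integrable (fun x => l (x, y₀)) μ := fun y₀ =>
    integrable_of_bdd (hc.comp (continuous_id.prodMk continuous_const))
      (fun x => hb x y₀)
  rw [Real.dist_eq, ← integral_sub (hint y) (hint y')]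
  have := norm_integral_le_of_norm_le_const (μ := μ)
    (f := fun x => l (x, y) - l (x, y')) (C := (C : ℝ) * dist y y')
    (Filter.Eventually.of_forall fun x => by
      have := (hly x).dist_le_mul y y'
      simpa [Real.norm_eq_abs, Real.dist_eq] using this)
  simpa [Real.norm_eq_abs, measure_univ] using this

lemma hfun_bdd (hb : ∀ x y, |l (x, y)| ≤ M)
    (μ : Measure (EuclideanSpace ℝ (Fin dx))) [IsProbabilityMeasure μ] (y) :
    |∫ x, l (x, y) ∂μ| ≤ M := by
  have := norm_integral_le_of_norm_le_const (μ := μ) (f := fun x => l (x, y)) (C := M)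
    (Filter.Eventually.of_forall fun x => by simpa [Real.norm_eq_abs] using hb x y)
  simpa [Real.norm_eq_abs, measure_univ] using this

lemma Lexp_abs_le (hb : ∀ x y, |l (x, y)| ≤ M)
    (μ : Measure (EuclideanSpace ℝ (Fin dx))) [IsProbabilityMeasure μ]
    (ν : Measure (EuclideanSpace ℝ (Fin dy))) [IsProbabilityMeasure ν] :
    |Lexp l μ ν| ≤ M := by
  have := norm_integral_le_of_norm_le_const (μ := ν)
    (f := fun y => ∫ x, l (x, y) ∂μ) (C := M)
    (Filter.Eventually.of_forall fun y => by
      simpa [Real.norm_eq_abs] using hfun_bdd hb μ y)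
  simpa [Lexp, Real.norm_eq_abs, measure_univ] using this

lemma Lexp_snd_diff (hc : Continuous l) (hb : ∀ x y, |l (x, y)| ≤ M)
    (hly : ∀ x, LipschitzWith C (fun y => l (x, y)))
    (η η' : Measure (EuclideanSpace ℝ (Fin dx) × EuclideanSpace ℝ (Fin dy)))
    [IsProbabilityMeasure η] [IsProbabilityMeasure η']
    (μ' : Measure (EuclideanSpace ℝ (Fin dx))) [IsProbabilityMeasure μ'] :
    |Lexp l μ' (η.map Prod.snd) - Lexp l μ' (η'.map Prod.snd)| ≤
      (M + C) * dBL η η' := by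
  set h : EuclideanSpace ℝ (Fin dy) → ℝ := fun y => ∫ x, l (x, y) ∂μ' with hh
  have hlip : LipschitzWith C h := hfun_lip hc hb hly μ'
  have hmap : ∀ (ρ : Measure (EuclideanSpace ℝ (Fin dx) × EuclideanSpace ℝ (Fin dy))),
      Lexp l μ' (ρ.map Prod.snd) = ∫ z, h z.2 ∂ρ := fun ρ => by
    rw [Lexp, integral_map measurable_snd.aemeasurable hlip.continuous.aestronglyMeasurable]
  rw [hmap η, hmap η']
  have hlip2 : LipschitzWith C (fun z :
      EuclideanSpace ℝ (Fin dx) × EuclideanSpace ℝ (Fin dy) => h z.2) := by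
    have := hlip.comp (LipschitzWith.prod_snd (α := EuclideanSpace ℝ (Fin dx)) (β := EuclideanSpace ℝ (Fin dy))); rwa [mul_one] at this
  exact abs_integral_sub_le_dBL η η' (fun z => hfun_bdd hb μ' z.2) hlip2

lemma Lexp_fst_diff (hc : Continuous l) (hb : ∀ x y, |l (x, y)| ≤ M)
    (hlx : ∀ y, LipschitzWith C (fun x => l (x, y)))
    (hly : ∀ x, LipschitzWith C (fun y => l (x, y)))
    (η η' : Measure (EuclideanSpace ℝ (Fin dx) × EuclideanSpace ℝ (Fin dy)))
    [IsProbabilityMeasure η] [IsProbabilityMeasure η']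
    (ν' : Measure (EuclideanSpace ℝ (Fin dy))) [IsProbabilityMeasure ν'] :
    |Lexp l (η.map Prod.fst) ν' - Lexp l (η'.map Prod.fst) ν'| ≤
      (M + C) * dBL η η' := by
  haveI : IsProbabilityMeasure (η.map Prod.fst) :=
    Measure.isProbabilityMeasure_map measurable_fst.aemeasurable
  haveI : IsProbabilityMeasure (η'.map Prod.fst) :=
    Measure.isProbabilityMeasure_map measurable_fst.aemeasurable
  set F : EuclideanSpace ℝ (Fin dy) → ℝ := fun y => ∫ x, l (x, y) ∂(η.map Prod.fst)
  set F' : EuclideanSpace ℝ (Fin dy) → ℝ := fun y => ∫ x, l (x, y) ∂(η'.map Prod.fst)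
  have hFlip : LipschitzWith C F := hfun_lip hc hb hly _
  have hF'lip : LipschitzWith C F' := hfun_lip hc hb hly _
  have hFint : Integrable F ν' := integrable_of_bdd hFlip.continuous (hfun_bdd hb _)
  have hF'int : Integrable F' ν' := integrable_of_bdd hF'lip.continuous (hfun_bdd hb _)
  have key : ∀ y, |F y - F' y| ≤ (M + C) * dBL η η' := by
    intro y
    have hmap : ∀ (ρ : Measure (EuclideanSpace ℝ (Fin dx) × EuclideanSpace ℝ (Fin dy))),
        (∫ x, l (x, y) ∂(ρ.map Prod.fst)) = ∫ z, l (z.1, y) ∂ρ := fun ρ =>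
      integral_map measurable_fst.aemeasurable
        ((show Continuous fun x : EuclideanSpace ℝ (Fin dx) => l (x, y) from
          hc.comp (continuous_id.prodMk continuous_const)).aestronglyMeasurable)
    show |(∫ x, l (x, y) ∂(η.map Prod.fst)) - ∫ x, l (x, y) ∂(η'.map Prod.fst)| ≤ _
    rw [hmap η, hmap η']
    have hlip2 : LipschitzWith C (fun z :
        EuclideanSpace ℝ (Fin dx) × EuclideanSpace ℝ (Fin dy) => l (z.1, y)) := by
      have := (hlx y).comp (LipschitzWith.prod_fst (α := EuclideanSpace ℝ (Fin dx)) (β := EuclideanSpace ℝ (Fin dy))); rwa [mul_one] at this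
    exact abs_integral_sub_le_dBL η η' (fun z => hb z.1 y) hlip2
  have hrw : Lexp l (η.map Prod.fst) ν' - Lexp l (η'.map Prod.fst) ν' =
      ∫ y, (F y - F' y) ∂ν' := by
    rw [integral_sub hFint hF'int]; rfl
  rw [hrw]
  have hMC : 0 ≤ (M + C) * dBL η η' :=
    mul_le_mul_of_nonneg_left (dBL_nonneg η η') (by
      have : 0 ≤ M := le_trans (abs_nonneg _) (hb 0 0)
      positivity) |>.trans_eq' (by simp)
  have := norm_integral_le_of_norm_le_const (μ := ν')
    (f := fun y => F y - F' y) (C := (M + C) * dBL η η')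
    (Filter.Eventually.of_forall fun y => by simpa [Real.norm_eq_abs] using key y)
  simpa [Real.norm_eq_abs, measure_univ] using this

end main

section final
variable {dx dy : ℕ}
  {l : EuclideanSpace ℝ (Fin dx) × EuclideanSpace ℝ (Fin dy) → ℝ} {M : ℝ} {C : ℝ≥0}

instance nonemptyPM {d : ℕ} : Nonempty (ProbabilityMeasure (EuclideanSpace ℝ (Fin d))) :=
  ⟨⟨Measure.dirac 0, inferInstance⟩⟩

lemma NImarg_diff (hc : Continuous l) (hb : ∀ x y, |l (x, y)| ≤ M)
    (hlx : ∀ y, LipschitzWith C (fun x => l (x, y)))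
    (hly : ∀ x, LipschitzWith C (fun y => l (x, y)))
    (η η' : Measure (EuclideanSpace ℝ (Fin dx) × EuclideanSpace ℝ (Fin dy)))
    [IsProbabilityMeasure η] [IsProbabilityMeasure η'] :
    |NImarg l η - NImarg l η'| ≤ 2 * (M + C) * dBL η η' := by
  haveI h1 : IsProbabilityMeasure (η.map Prod.fst) :=
    Measure.isProbabilityMeasure_map measurable_fst.aemeasurable
  haveI h2 : IsProbabilityMeasure (η'.map Prod.fst) :=
    Measure.isProbabilityMeasure_map measurable_fst.aemeasurable
  haveI h3 : IsProbabilityMeasure (η.map Prod.snd) :=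
    Measure.isProbabilityMeasure_map measurable_snd.aemeasurable
  haveI h4 : IsProbabilityMeasure (η'.map Prod.snd) :=
    Measure.isProbabilityMeasure_map measurable_snd.aemeasurable
  have bddA : ∀ (μ : Measure (EuclideanSpace ℝ (Fin dx))) [IsProbabilityMeasure μ],
      BddAbove (Set.range fun ν' : ProbabilityMeasure (EuclideanSpace ℝ (Fin dy)) =>
        Lexp l μ (ν' : Measure (EuclideanSpace ℝ (Fin dy)))) := by
    intro μ _
    refine ⟨M, ?_⟩
    rintro r ⟨ν', rfl⟩
    exact (abs_le.1 (Lexp_abs_le hb μ _)).2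
  have bddB : ∀ (ν : Measure (EuclideanSpace ℝ (Fin dy))) [IsProbabilityMeasure ν],
      BddBelow (Set.range fun μ' : ProbabilityMeasure (EuclideanSpace ℝ (Fin dx)) =>
        Lexp l (μ' : Measure (EuclideanSpace ℝ (Fin dx))) ν) := by
    intro ν _
    refine ⟨-M, ?_⟩
    rintro r ⟨μ', rfl⟩
    exact (abs_le.1 (Lexp_abs_le hb _ ν)).1
  have hsup : |(⨆ ν' : ProbabilityMeasure (EuclideanSpace ℝ (Fin dy)),
        Lexp l (η.map Prod.fst) (ν' : Measure (EuclideanSpace ℝ (Fin dy)))) -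
      ⨆ ν' : ProbabilityMeasure (EuclideanSpace ℝ (Fin dy)),
        Lexp l (η'.map Prod.fst) (ν' : Measure (EuclideanSpace ℝ (Fin dy)))| ≤
      (M + C) * dBL η η' :=
    abs_ciSup_sub_ciSup (bddA _) (bddA _)
      (fun ν' => Lexp_fst_diff hc hb hlx hly η η' _)
  have hinf : |(⨅ μ' : ProbabilityMeasure (EuclideanSpace ℝ (Fin dx)),
        Lexp l (μ' : Measure (EuclideanSpace ℝ (Fin dx))) (η.map Prod.snd)) -
      ⨅ μ' : ProbabilityMeasure (EuclideanSpace ℝ (Fin dx)),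
        Lexp l (μ' : Measure (EuclideanSpace ℝ (Fin dx))) (η'.map Prod.snd)| ≤
      (M + C) * dBL η η' :=
    abs_ciInf_sub_ciInf (bddB _) (bddB _)
      (fun μ' => Lexp_snd_diff hc hb hly η η' _)
  rw [NImarg, NImarg, NIerr, NIerr]
  have a1 := abs_le.1 hsup
  have a2 := abs_le.1 hinf
  rw [abs_le]
  constructor <;> [skip; skip] <;>
  · obtain ⟨b1, b2⟩ := a1
    obtain ⟨c1, c2⟩ := a2
    linarith

/-- If `sup_{t ∈ [0,T]} d_BL(γⁿ_t, γ_t) → 0`, then the Nikaidô–Isoda errors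
of the marginals converge uniformly in `t ∈ [0,T]`. -/
theorem stmt15 {dx dy : ℕ} (hdx : 1 ≤ dx) (hdy : 1 ≤ dy)
    (T : ℝ) (hT : 0 < T)
    (l : EuclideanSpace ℝ (Fin dx) × EuclideanSpace ℝ (Fin dy) → ℝ)
    (M : ℝ) (C : ℝ≥0) (hc : Continuous l)
    (hb : ∀ x y, |l (x, y)| ≤ M)
    (hlx : ∀ y, LipschitzWith C (fun x => l (x, y)))
    (hly : ∀ x, LipschitzWith C (fun y => l (x, y)))
    (γn : ℕ → ℝ → Measure (EuclideanSpace ℝ (Fin dx) × EuclideanSpace ℝ (Fin dy)))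
    (γ : ℝ → Measure (EuclideanSpace ℝ (Fin dx) × EuclideanSpace ℝ (Fin dy)))
    (hγn : ∀ n t, IsProbabilityMeasure (γn n t))
    (hγ : ∀ t, IsProbabilityMeasure (γ t))
    (hconv : Filter.Tendsto
      (fun n => ⨆ t : Set.Icc (0 : ℝ) T, dBL (γn n t) (γ t))
      Filter.atTop (nhds 0)) :
    Filter.Tendsto
      (fun n => ⨆ t : Set.Icc (0 : ℝ) T, |NImarg l (γn n t) - NImarg l (γ t)|)
      Filter.atTop (nhds 0) := by
  have hM0 : 0 ≤ M := le_trans (abs_nonneg _) (hb 0 0)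
  have hK0 : (0 : ℝ) ≤ 2 * (M + C) := by positivity
  have key : ∀ n (t : ℝ), |NImarg l (γn n t) - NImarg l (γ t)| ≤
      2 * (M + C) * dBL (γn n t) (γ t) := fun n t => by
    haveI := hγn n t; haveI := hγ t
    exact NImarg_diff hc hb hlx hly _ _
  haveI : Nonempty (Set.Icc (0 : ℝ) T) := ⟨⟨0, le_refl 0, le_of_lt hT⟩⟩
  have hnonneg : ∀ n, 0 ≤ ⨆ t : Set.Icc (0 : ℝ) T,
      |NImarg l (γn n t) - NImarg l (γ t)| := fun n =>
    Real.iSup_nonneg fun t => abs_nonneg _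
  have hub : ∀ n, (⨆ t : Set.Icc (0 : ℝ) T, |NImarg l (γn n t) - NImarg l (γ t)|) ≤
      2 * (M + C) * ⨆ t : Set.Icc (0 : ℝ) T, dBL (γn n t) (γ t) := by
    intro n
    apply ciSup_le
    intro t
    have hbdd : BddAbove (Set.range fun t : Set.Icc (0 : ℝ) T => dBL (γn n t) (γ t)) := by
      refine ⟨2, ?_⟩
      rintro r ⟨t, rfl⟩
      haveI := hγn n (t : ℝ); haveI := hγ (t : ℝ)
      exact dBL_le_two _ _
    calc |NImarg l (γn n t) - NImarg l (γ t)| ≤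
        2 * (M + C) * dBL (γn n t) (γ t) := key n t
      _ ≤ 2 * (M + C) * ⨆ t : Set.Icc (0 : ℝ) T, dBL (γn n t) (γ t) :=
        mul_le_mul_of_nonneg_left (le_ciSup hbdd t) hK0
  exact squeeze_zero hnonneg hub (by simpa using hconv.const_mul (2 * (M + C)))
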